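/- (Proposition 3) Let G=(V,E) be a finite simple undirected graph with edge weights w:E→ℚ containing a triangle with edges {v1,v2}, {v1,v3}, {v2,v3}∈E such that w({v1,v2})>0, w({v1,v3})>0, and w({v2,v3})<0. Let V1⊂V be such that {v1,v2},{v1,v3}∈δ(V1), and let V2⊂V be such that {v1,v2},{v2,v3}∈δ(V2). If w({v1,v2}) + w({v1,v3}) ≥ Σ_{e∈δ(V1)∖{{v1,v2},{v1,v3}}} |w(e)| and w({v1,v2}) − w({v2,v3}) ≥ Σ_{e∈δ(V2)∖{{v1,v2},{v2,v3}}} |w(e)|, then there exists an optimal solution x∈{0,1}^E of the maximum-cut instance (G,w) with x({v1,v2})=1. -/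

import Mathlib

variable {V : Type*}

/-- `e` is an edge of `G` that crosses the cut induced by the vertex set `U`,
i.e. `e ∈ δ(U) := {{u,v} ∈ E : u ∈ U, v ∉ U}`. -/
def inCutSet (G : SimpleGraph V) (U : Set V) (e : Sym2 V) : Prop :=
  e ∈ G.edgeSet ∧ (∃ u ∈ e, u ∈ U) ∧ ∃ v ∈ e, v ∉ U

/-- The edge cut `δ(U)` as a finset. -/
noncomputable def cutFinset [Fintype V] (G : SimpleGraph V) (U : Set V) :
    Finset (Sym2 V) := by
  classical
  exact Finset.univ.filter (inCutSet G U)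

/-- The weight `w(δ(U))` of the cut induced by `U`. -/
noncomputable def cutWeight [Fintype V] (G : SimpleGraph V) (w : Sym2 V → ℚ) (U : Set V) : ℚ :=
  ∑ e ∈ cutFinset G U, w e

/-!
Start from a maximum cut `W`; if it misses `{v1,v2}`, then `v1` and `v2` lie on the same side of
it. Flip that cut along `V1` if `v3` is on the same side as well, and along `V2` otherwise. In
either case `{v1,v2}` enters the cut, the other triangle edge of `δ(Vi)` contributes `w({v1,v3})`
or `-w({v2,v3})`, and every further edge of `δ(Vi)` changes the weight by `±w(e) ≥ -|w(e)|`; the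
hypothesis makes the total change nonnegative, so `W ∆ Vi` is again a maximum cut.
-/

theorem Finset.sum_symmDiff_eq_sum_add_sum_ite {α M : Type*} [DecidableEq α] [AddCommGroup M]
    (A B : Finset α) (f : α → M) :
    ∑ x ∈ symmDiff A B, f x = ∑ x ∈ A, f x + ∑ x ∈ B, if x ∈ A then -f x else f x := by
  rw [symmDiff_def, Finset.sup_eq_union, Finset.sum_union disjoint_sdiff_sdiff,
    ← Finset.sum_inter_add_sum_sdiff A B, Finset.sum_ite, Finset.filter_mem_eq_inter,
    Finset.filter_notMem_eq_sdiff, Finset.inter_comm B A, Finset.sum_neg_distrib]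
  abel

section MaxCut

def IsMaxCut [Fintype V] (G : SimpleGraph V) (w : Sym2 V → ℚ) (W : Set V) : Prop :=
  ∀ S : Set V, cutWeight G w S ≤ cutWeight G w W

variable {G : SimpleGraph V}

theorem mem_cutFinset [Fintype V] {U : Set V} {e : Sym2 V} :
    e ∈ cutFinset G U ↔ inCutSet G U e := by
  classical
  simp [cutFinset]

theorem inCutSet_mk {U : Set V} {a b : V} :
    inCutSet G U s(a, b) ↔ G.Adj a b ∧ Xor (a ∈ U) (b ∈ U) := by
  simp only [inCutSet, SimpleGraph.mem_edgeSet, Sym2.mem_iff, exists_eq_or_imp, exists_eq_left,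
    Xor]
  tauto

theorem inCutSet_symmDiff {S U : Set V} {e : Sym2 V} :
    inCutSet G (symmDiff S U) e ↔ Xor (inCutSet G S e) (inCutSet G U e) := by
  induction e using Sym2.ind with
  | _ a b =>
    simp only [inCutSet_mk, Set.mem_symmDiff, Xor]
    tauto

/-- A triangle meets every cut in an even number of edges. -/
theorem inCutSet_of_inCutSet_of_not_inCutSet {U : Set V} {a b c : V}
    (hab : G.Adj a b) (hbc : G.Adj b c) (habU : ¬inCutSet G U s(a, b))
    (hacU : inCutSet G U s(a, c)) :
    inCutSet G U s(b, c) := by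
  simp only [inCutSet_mk, Xor] at *
  tauto

variable [Fintype V] [DecidableEq V]

theorem cutFinset_symmDiff (S U : Set V) :
    cutFinset G (symmDiff S U) = symmDiff (cutFinset G S) (cutFinset G U) := by
  ext e
  simp only [Finset.mem_symmDiff, mem_cutFinset, inCutSet_symmDiff, Xor]

theorem cutWeight_symmDiff (w : Sym2 V → ℚ) (S U : Set V) :
    cutWeight G w (symmDiff S U) = cutWeight G w S +
      ∑ e ∈ cutFinset G U, if e ∈ cutFinset G S then -w e else w e := by
  rw [cutWeight, cutFinset_symmDiff, Finset.sum_symmDiff_eq_sum_add_sum_ite, cutWeight]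

theorem cutWeight_le_cutWeight_symmDiff {w : Sym2 V → ℚ} {W U : Set V} {T : Finset (Sym2 V)}
    (hT : T ⊆ cutFinset G U)
    (hbound : ∑ e ∈ cutFinset G U \ T, |w e| ≤
      ∑ e ∈ T, if e ∈ cutFinset G W then -w e else w e) :
    cutWeight G w W ≤ cutWeight G w (symmDiff W U) := by
  have hrest : -∑ e ∈ cutFinset G U \ T, |w e| ≤
      ∑ e ∈ cutFinset G U \ T, if e ∈ cutFinset G W then -w e else w e := by
    rw [← Finset.sum_neg_distrib]
    refine Finset.sum_le_sum fun e _ => ?_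
    split_ifs
    · exact neg_le_neg (le_abs_self _)
    · exact neg_abs_le _
  rw [cutWeight_symmDiff, ← Finset.sum_sdiff hT]
  linarith

theorem IsMaxCut.symmDiff {w : Sym2 V → ℚ} {W U : Set V} (hW : IsMaxCut G w W) {e f : Sym2 V}
    (hef : e ≠ f) (heU : inCutSet G U e) (hfU : inCutSet G U f) (heW : ¬inCutSet G W e)
    (hbound : ∑ x ∈ cutFinset G U \ {e, f}, |w x| ≤
      w e + if f ∈ cutFinset G W then -w f else w f) :
    IsMaxCut G w (symmDiff W U) ∧ inCutSet G (symmDiff W U) e := by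
  have hsub : {e, f} ⊆ cutFinset G U := by
    simp only [Finset.insert_subset_iff, Finset.singleton_subset_iff, mem_cutFinset]
    exact ⟨heU, hfU⟩
  refine ⟨fun S => (hW S).trans (cutWeight_le_cutWeight_symmDiff hsub ?_), ?_⟩
  · rw [Finset.sum_pair hef]
    simpa [mem_cutFinset, heW] using hbound
  · exact inCutSet_symmDiff.2 (Or.inr ⟨heU, heW⟩)

end MaxCut

theorem stmt5_general [Fintype V] [DecidableEq V] (G : SimpleGraph V) (w : Sym2 V → ℚ)
    (v1 v2 v3 : V)
    (V1 : Set V)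
    (h12V1 : inCutSet G V1 s(v1, v2)) (h13V1 : inCutSet G V1 s(v1, v3))
    (V2 : Set V)
    (h12V2 : inCutSet G V2 s(v1, v2)) (h23V2 : inCutSet G V2 s(v2, v3))
    (hb1 : w s(v1, v2) + w s(v1, v3) ≥
      ∑ e ∈ cutFinset G V1 \ {s(v1, v2), s(v1, v3)}, |w e|)
    (hb2 : w s(v1, v2) - w s(v2, v3) ≥
      ∑ e ∈ cutFinset G V2 \ {s(v1, v2), s(v2, v3)}, |w e|) :
    ∃ W : Set V, (∀ S : Set V, cutWeight G w S ≤ cutWeight G w W) ∧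
      inCutSet G W s(v1, v2) := by
  obtain ⟨W, hW⟩ : ∃ W, IsMaxCut G w W := Finite.exists_max (cutWeight G w)
  by_cases h12W : inCutSet G W s(v1, v2)
  · exact ⟨W, hW, h12W⟩
  have h12 : G.Adj v1 v2 := h12V1.1
  have h13 : G.Adj v1 v3 := h13V1.1
  have h23 : G.Adj v2 v3 := h23V2.1
  by_cases h13W : inCutSet G W s(v1, v3)
  · have h23W := inCutSet_of_inCutSet_of_not_inCutSet h12 h23 h12W h13W
    have hne : s(v1, v2) ≠ s(v2, v3) := by
      rw [Sym2.eq_swap, Ne, Sym2.congr_right]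
      exact h13.ne
    obtain ⟨hmax, hcut⟩ := hW.symmDiff hne h12V2 h23V2 h12W <| by
      rw [if_pos (mem_cutFinset.2 h23W)]
      linarith
    exact ⟨_, hmax, hcut⟩
  · have hne : s(v1, v2) ≠ s(v1, v3) := by
      rw [Ne, Sym2.congr_right]
      exact h23.ne
    obtain ⟨hmax, hcut⟩ := hW.symmDiff hne h12V1 h13V1 h12W <| by
      rw [if_neg (mt mem_cutFinset.1 h13W)]
      linarith
    exact ⟨_, hmax, hcut⟩

/-- Proposition 3: the new triangle-based reduction criterion forcing `x({v1,v2}) = 1`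
in some optimal solution of the maximum-cut instance `(G,w)`. -/
theorem stmt5 [Fintype V] [DecidableEq V] (G : SimpleGraph V) (w : Sym2 V → ℚ)
    (v1 v2 v3 : V)
    (h12 : G.Adj v1 v2) (h13 : G.Adj v1 v3) (h23 : G.Adj v2 v3)
    (hw12 : 0 < w s(v1, v2)) (hw13 : 0 < w s(v1, v3)) (hw23 : w s(v2, v3) < 0)
    (V1 : Set V) (hV1 : V1 ⊂ Set.univ)
    (h12V1 : inCutSet G V1 s(v1, v2)) (h13V1 : inCutSet G V1 s(v1, v3))
    (V2 : Set V) (hV2 : V2 ⊂ Set.univ)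
    (h12V2 : inCutSet G V2 s(v1, v2)) (h23V2 : inCutSet G V2 s(v2, v3))
    (hb1 : w s(v1, v2) + w s(v1, v3) ≥
      ∑ e ∈ cutFinset G V1 \ {s(v1, v2), s(v1, v3)}, |w e|)
    (hb2 : w s(v1, v2) - w s(v2, v3) ≥
      ∑ e ∈ cutFinset G V2 \ {s(v1, v2), s(v2, v3)}, |w e|) :
    ∃ W : Set V, (∀ S : Set V, cutWeight G w S ≤ cutWeight G w W) ∧
      inCutSet G W s(v1, v2) :=
  stmt5_general G w v1 v2 v3 V1 h12V1 h13V1 V2 h12V2 h23V2 hb1 hb2
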